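/- For real σ, ν with ν < 0, 0 < σ < 1/4, set η(σ,ν) = arcsin(e^{πν} sin 2πσ)/(2π) (principal branch) and assume 0 < η(σ,ν) < σ; set ρ(σ,ν) = (1/(4πi)) Log( sin(2πη)/sin(2π(σ+η)) ). Define W(σ,ν) by 8π² W(σ,ν) = Li₂(−e^{2πi(σ+η−iν/2)}) + Li₂(−e^{−2πi(σ+η+iν/2)}) − (2πη)² + (πν)², with principal branches of the dilogarithm. Then on this domain ∂W/∂σ = η and ∂W/∂ν = iρ, i.e. ρ = −i ∂W/∂ν; thus W is a generating function of the change of coordinates (σ,η) ↦ (ν,ρ). -/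

import Mathlib

/-- The classical dilogarithm `Li₂(z) = Σ_{n≥1} zⁿ/n²` (principal branch on the
unit disk; on the domain considered below all arguments lie in the open unit disk). -/
noncomputable def Li2 (z : ℂ) : ℂ := ∑' n : ℕ, z ^ (n + 1) / ((n : ℂ) + 1) ^ 2

/-- `η(σ,ν) = arcsin(e^{πν} sin 2πσ)/(2π)` (principal branch of arcsin). -/
noncomputable def etaFn (σ ν : ℝ) : ℝ :=
  Real.arcsin (Real.exp (Real.pi * ν) * Real.sin (2 * Real.pi * σ)) / (2 * Real.pi)

/-- `ρ(σ,ν) = (1/(4πi)) Log(sin 2πη / sin 2π(σ+η))` (principal branch of Log). -/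
noncomputable def rhoFn (σ ν : ℝ) : ℂ :=
  (1 / (4 * Real.pi * Complex.I)) *
    Complex.log ((Real.sin (2 * Real.pi * etaFn σ ν) : ℂ) /
      (Real.sin (2 * Real.pi * (σ + etaFn σ ν)) : ℂ))

/-- The generating function `W(σ,ν)`, defined by
`8π² W = Li₂(−e^{2πi(σ+η−iν/2)}) + Li₂(−e^{−2πi(σ+η+iν/2)}) − (2πη)² + (πν)²`. -/
noncomputable def Wgen (σ ν : ℝ) : ℂ :=
  (1 / (8 * (Real.pi : ℂ) ^ 2)) *
    (Li2 (-Complex.exp (2 * Real.pi * Complex.I *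
        ((σ : ℂ) + (etaFn σ ν : ℂ) - Complex.I * (ν : ℂ) / 2))) +
      Li2 (-Complex.exp (-(2 * Real.pi * Complex.I *
        ((σ : ℂ) + (etaFn σ ν : ℂ) + Complex.I * (ν : ℂ) / 2)))) -
      (2 * Real.pi * (etaFn σ ν : ℂ)) ^ 2 + (Real.pi * (ν : ℂ)) ^ 2)

/-!
Put `a = πν`, `φ = 2πσ`, `ψ = 2πη`, so that
`8π² W = Li₂(-e^{a+i(φ+ψ)}) + Li₂(-e^{a-i(φ+ψ)}) - ψ² + a²`, and recall that
`d/dw Li₂(-e^w) = -log(1 + e^w)` for `Re w < 0`. The relation `sin ψ = e^a sin φ` defining `η`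
is exactly what gives `1 + e^{a ± i(φ+ψ)} = r e^{± iψ}` with `r = sin(φ+ψ)/sin φ > 0`, so the two
logarithms are `log r ± iψ`. Differentiating, the `dψ`-terms of the dilogarithms cancel that of
`-ψ²`, leaving `d(8π² W) = 2ψ dφ + 2(a - log r) da`; that is, `∂W/∂σ = η` and
`∂W/∂ν = (πν - log r)/(4π)`, which is `iρ`.
-/

open Real
open Complex (I)

theorem hasDerivAt_Li2 {z : ℂ} (hz : ‖z‖ < 1) :
    HasDerivAt Li2 (∑' n : ℕ, z ^ n / ((n : ℂ) + 1)) z := by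
  obtain ⟨r, hzr, hr1⟩ := exists_between hz
  have hr0 : 0 < r := (norm_nonneg z).trans_lt hzr
  refine hasDerivAt_tsum_of_isPreconnected
    (g := fun (n : ℕ) (y : ℂ) => y ^ (n + 1) / ((n : ℂ) + 1) ^ 2)
    (g' := fun (n : ℕ) (y : ℂ) => y ^ n / ((n : ℂ) + 1)) (u := fun n : ℕ => r ^ n)
    (summable_geometric_of_lt_one hr0.le hr1) Metric.isOpen_ball
    (convex_ball (0 : ℂ) r).isPreconnected (fun n y _ => ?_) (fun n y hy => ?_)
    (Metric.mem_ball_self hr0) ?_ (mem_ball_zero_iff.2 hzr)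
  · refine ((hasDerivAt_pow (n + 1) y).div_const (((n : ℂ) + 1) ^ 2)).congr_deriv ?_
    have : (n : ℂ) + 1 ≠ 0 := Nat.cast_add_one_ne_zero n
    push_cast
    field_simp
  · have hn : (1 : ℝ) ≤ ‖(n : ℂ) + 1‖ := by
      rw [← Nat.cast_add_one, Complex.norm_natCast]
      exact_mod_cast Nat.succ_pos n
    rw [norm_div, norm_pow]
    exact (div_le_self (by positivity) hn).trans
      (pow_le_pow_left₀ (norm_nonneg y) (mem_ball_zero_iff.1 hy).le n)
  · simp [summable_zero]

theorem mul_tsum_pow_div_succ {z : ℂ} (hz : ‖z‖ < 1) :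
    z * ∑' n : ℕ, z ^ n / ((n : ℂ) + 1) = -Complex.log (1 - z) := by
  have h := (hasSum_nat_add_iff' 1).2 (Complex.hasSum_taylorSeries_neg_log hz)
  simp only [Finset.range_one, Finset.sum_singleton, pow_zero, Nat.cast_zero, div_zero,
    sub_zero, Nat.cast_add, Nat.cast_one] at h
  rw [← tsum_mul_left]
  exact (h.congr_fun fun n => by ring).tsum_eq

theorem hasDerivAt_Li2_neg_exp {w : ℂ} (hw : w.re < 0) :
    HasDerivAt (fun w => Li2 (-Complex.exp w)) (-Complex.log (1 + Complex.exp w)) w := by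
  have hz : ‖-Complex.exp w‖ < 1 := by
    rwa [norm_neg, Complex.norm_exp, Real.exp_lt_one_iff]
  have h := (hasDerivAt_Li2 hz).comp w (Complex.hasDerivAt_exp w).neg
  refine h.congr_deriv ?_
  rw [← sub_neg_eq_add, ← mul_tsum_pow_div_succ hz]
  ring

theorem Complex.sin_add_sin_mul_exp (x y : ℂ) :
    Complex.sin x + Complex.sin y * Complex.exp ((x + y) * I) =
      Complex.exp (y * I) * Complex.sin (x + y) := by
  simp only [Complex.sin, neg_mul, Complex.exp_neg, add_mul, Complex.exp_add]
  have := Complex.exp_ne_zero (x * I)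
  have := Complex.exp_ne_zero (y * I)
  field_simp
  ring

theorem one_add_exp_of_sin_eq {a φ ψ : ℝ} (h : sin ψ = exp a * sin φ) (hφ : sin φ ≠ 0) :
    1 + Complex.exp (a + (φ + ψ) * I) =
      ((sin (φ + ψ) / sin φ : ℝ) : ℂ) * Complex.exp (ψ * I) := by
  have key := Complex.sin_add_sin_mul_exp φ ψ
  rw [← Complex.ofReal_add, ← Complex.ofReal_sin, ← Complex.ofReal_sin, ← Complex.ofReal_sin, h,
    Complex.ofReal_mul, Complex.ofReal_exp] at key
  have hφC : (sin φ : ℂ) ≠ 0 := Complex.ofReal_ne_zero.2 hφ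
  rw [Complex.exp_add, Complex.ofReal_div, ← Complex.ofReal_add]
  field_simp
  ring_nf at key ⊢
  linear_combination key

theorem log_one_add_exp_of_sin_eq {a φ ψ : ℝ} (h : sin ψ = exp a * sin φ)
    (hr : 0 < sin (φ + ψ) / sin φ) (hψ : |ψ| < π) :
    Complex.log (1 + Complex.exp (a + (φ + ψ) * I)) = log (sin (φ + ψ) / sin φ) + ψ * I := by
  have hφ : sin φ ≠ 0 := fun h0 => by simp [h0] at hr
  rw [one_add_exp_of_sin_eq h hφ, Complex.log_ofReal_mul hr (Complex.exp_ne_zero _),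
    Complex.log_exp] <;>
  simp only [Complex.mul_I_im, Complex.ofReal_re] <;>
  linarith [abs_lt.1 hψ]

theorem HasDerivAt.Li2_neg_exp {w : ℝ → ℂ} {w' : ℂ} {t : ℝ} (hw : HasDerivAt w w' t)
    (hre : (w t).re < 0) :
    HasDerivAt (fun t => Li2 (-Complex.exp (w t)))
      (-Complex.log (1 + Complex.exp (w t)) * w') t :=
  (hasDerivAt_Li2_neg_exp hre).comp t hw

/-- `8π² W` in the coordinates `a = πν`, `φ = 2πσ`, `ψ = 2πη`. -/
noncomputable def dilogPotential (a φ ψ : ℝ) : ℂ :=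
  Li2 (-Complex.exp (a + (φ + ψ) * I)) + Li2 (-Complex.exp (a - (φ + ψ) * I)) - ψ ^ 2 + a ^ 2

theorem Wgen_eq_dilogPotential (σ ν : ℝ) :
    Wgen σ ν = dilogPotential (π * ν) (2 * π * σ) (2 * π * etaFn σ ν) / (8 * π ^ 2) := by
  have e₁ : 2 * π * I * (σ + etaFn σ ν - I * ν / 2) =
      ((π * ν : ℝ) : ℂ) + ((2 * π * σ : ℝ) + (2 * π * etaFn σ ν : ℝ)) * I := by
    push_cast
    linear_combination (-(π * ν) : ℂ) * Complex.I_sq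
  have e₂ : -(2 * π * I * (σ + etaFn σ ν + I * ν / 2)) =
      ((π * ν : ℝ) : ℂ) - ((2 * π * σ : ℝ) + (2 * π * etaFn σ ν : ℝ)) * I := by
    push_cast
    linear_combination (-(π * ν) : ℂ) * Complex.I_sq
  rw [Wgen, dilogPotential, e₁, e₂]
  push_cast
  ring

theorem HasDerivAt.dilogPotential {a φ ψ : ℝ → ℝ} {a' φ' ψ' t : ℝ} (ha : HasDerivAt a a' t)
    (hφ : HasDerivAt φ φ' t) (hψ : HasDerivAt ψ ψ' t) (hneg : a t < 0)
    (hsin : Real.sin (ψ t) = Real.exp (a t) * Real.sin (φ t))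
    (hr : 0 < Real.sin (φ t + ψ t) / Real.sin (φ t)) (hψπ : |ψ t| < π) :
    HasDerivAt (fun t => dilogPotential (a t) (φ t) (ψ t))
      (2 * ψ t * φ' + 2 * (a t - Real.log (Real.sin (φ t + ψ t) / Real.sin (φ t))) * a') t := by
  have hθ := (hφ.ofReal_comp.add hψ.ofReal_comp).mul_const I
  have h₁ := (ha.ofReal_comp.add hθ).Li2_neg_exp (by simpa using hneg)
  have h₂ := (ha.ofReal_comp.sub hθ).Li2_neg_exp (by simpa using hneg)
  have hlog₁ := log_one_add_exp_of_sin_eq hsin hr hψπ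
  -- the conjugate term is the same identity at `(-φ, -ψ)`
  have hlog₂ := log_one_add_exp_of_sin_eq (a := a t) (φ := -φ t) (ψ := -ψ t)
    (by rw [sin_neg, sin_neg, hsin, mul_neg])
    (by rwa [← neg_add, sin_neg, sin_neg, neg_div_neg_eq]) (by rwa [abs_neg])
  rw [← neg_add, sin_neg, sin_neg, neg_div_neg_eq] at hlog₂
  push_cast at hlog₂
  refine (((h₁.add h₂).sub (hψ.ofReal_comp.pow 2)).add (ha.ofReal_comp.pow 2)).congr_deriv ?_
  simp only [Pi.add_apply, Pi.sub_apply]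
  rw [hlog₁, show (a t : ℂ) - (φ t + ψ t) * I = a t + (-φ t + -ψ t) * I by ring, hlog₂]
  push_cast
  linear_combination (-(2 : ℂ) * ψ t * (φ' + ψ')) * Complex.I_sq

theorem abs_exp_mul_sin_lt_one {a : ℝ} (ha : a < 0) (x : ℝ) : |exp a * sin x| < 1 := by
  rw [abs_mul, abs_of_pos (exp_pos a)]
  exact (mul_le_of_le_one_right (exp_pos a).le (abs_sin_le_one x)).trans_lt (exp_lt_one_iff.2 ha)

theorem sin_two_pi_mul_etaFn {σ ν : ℝ} (h : |exp (π * ν) * sin (2 * π * σ)| ≤ 1) :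
    sin (2 * π * etaFn σ ν) = exp (π * ν) * sin (2 * π * σ) := by
  rw [etaFn, mul_div_cancel₀ _ (by positivity), sin_arcsin (abs_le.1 h).1 (abs_le.1 h).2]

theorem DifferentiableAt.etaFn {s n : ℝ → ℝ} {t : ℝ} (hs : DifferentiableAt ℝ s t)
    (hn : DifferentiableAt ℝ n t) (h : |Real.exp (π * n t) * Real.sin (2 * π * s t)| < 1) :
    DifferentiableAt ℝ (fun t => etaFn (s t) (n t)) t := by
  have harcsin : DifferentiableAt ℝ arcsin (Real.exp (π * n t) * Real.sin (2 * π * s t)) :=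
    differentiableAt_arcsin.2 ⟨(abs_lt.1 h).1.ne', (abs_lt.1 h).2.ne⟩
  simp only [_root_.etaFn, div_eq_mul_inv]
  fun_prop

theorem I_mul_rhoFn {σ ν : ℝ}
    (hsin : sin (2 * π * etaFn σ ν) = exp (π * ν) * sin (2 * π * σ))
    (hr : 0 < sin (2 * π * σ + 2 * π * etaFn σ ν) / sin (2 * π * σ)) :
    I * rhoFn σ ν =
      ((π * ν - log (sin (2 * π * σ + 2 * π * etaFn σ ν) / sin (2 * π * σ))) / (4 * π) : ℝ) := by
  have hφ : sin (2 * π * σ) ≠ 0 := fun h0 => by simp [h0] at hr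
  have hratio : sin (2 * π * etaFn σ ν) / sin (2 * π * (σ + etaFn σ ν)) =
      exp (π * ν) / (sin (2 * π * σ + 2 * π * etaFn σ ν) / sin (2 * π * σ)) := by
    rw [hsin, mul_add]
    field_simp
  rw [rhoFn, ← Complex.ofReal_div, hratio, ← Complex.ofReal_log (by positivity),
    log_div (exp_pos _).ne' hr.ne', log_exp]
  push_cast
  field_simp

/-- On the domain `ν < 0`, `0 < σ < 1/4`, `0 < η(σ,ν) < σ`, the function `W` is a
generating function of the change of coordinates `(σ,η) ↦ (ν,ρ)`:
`∂W/∂σ = η` and `∂W/∂ν = iρ`, i.e. `ρ = −i ∂W/∂ν`. -/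
theorem Wgen_partial_derivatives (σ ν : ℝ)
    (hν : ν < 0) (hσ0 : 0 < σ) (hσ : σ < 1 / 4)
    (hη0 : 0 < etaFn σ ν) (hησ : etaFn σ ν < σ) :
    HasDerivAt (fun s : ℝ => Wgen s ν) ((etaFn σ ν : ℂ)) σ ∧
    HasDerivAt (fun n : ℝ => Wgen σ n) (Complex.I * rhoFn σ ν) ν := by
  have hπ := pi_pos
  have hx := abs_exp_mul_sin_lt_one (by nlinarith : π * ν < 0) (2 * π * σ)
  have hsin := sin_two_pi_mul_etaFn hx.le
  have hr : 0 < sin (2 * π * σ + 2 * π * etaFn σ ν) / sin (2 * π * σ) :=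
    div_pos (sin_pos_of_pos_of_lt_pi (by positivity) (by nlinarith))
      (sin_pos_of_pos_of_lt_pi (by positivity) (by nlinarith))
  have hψ : |2 * π * etaFn σ ν| < π := by
    rw [abs_of_pos (by positivity)]
    nlinarith
  simp_rw [Wgen_eq_dilogPotential]
  constructor
  · have hη := differentiableAt_fun_id.etaFn (differentiableAt_const ν) hx
    refine ((HasDerivAt.dilogPotential (hasDerivAt_const σ (π * ν))
      ((hasDerivAt_id' σ).const_mul (2 * π)) (hη.hasDerivAt.const_mul (2 * π))
      (by nlinarith) hsin hr hψ).div_const _).congr_deriv ?_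
    push_cast
    field_simp
    ring
  · have hη := (differentiableAt_const σ).etaFn differentiableAt_fun_id hx
    refine ((HasDerivAt.dilogPotential ((hasDerivAt_id' ν).const_mul π)
      (hasDerivAt_const ν (2 * π * σ)) (hη.hasDerivAt.const_mul (2 * π))
      (by nlinarith) hsin hr hψ).div_const _).congr_deriv ?_
    rw [I_mul_rhoFn hsin hr]
    push_cast
    field_simp
    ring
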